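/- arXiv:1202.5795 — 9 statements merged into one kernel-verified Lean document; each statement's English description precedes it below -/
import Mathlib

section
/- Suppose that for every subset A ⊆ M with |A| < λ there exists ψ ∈ Ψ such that P ψ A holds. Then there exists a single ψ ∈ Ψ such that P ψ A holds simultaneously for every subset A ⊆ M with |A| < λ. -/
universe u

/-- Abstract pigeonhole behind the construction of uniform solving schemes
(Shelah 950, Observation b47(3)/b24(1)): if `Ψ` is a nonempty set of size at most `θ`,
`λ` has cofinality `> θ`, and `P ψ A` is antitone in `A`, then pointwise solvability
of all subsets of `M` of size `< λ` yields a single uniform solver `ψ`. -/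
theorem stmt_0 {M Ψ : Type u} [Nonempty Ψ] (θ lam : Cardinal.{u})
    (hΨ : Cardinal.mk Ψ ≤ θ) (hθ : Cardinal.aleph0 ≤ θ)
    (hcf : θ < lam.ord.cof)
    (P : Ψ → Set M → Prop)
    (hmono : ∀ (ψ : Ψ) (A B : Set M), P ψ A → B ⊆ A → P ψ B)
    (h : ∀ A : Set M, Cardinal.mk ↥A < lam → ∃ ψ, P ψ A) :
    ∃ ψ : Ψ, ∀ A : Set M, Cardinal.mk ↥A < lam → P ψ A := by
  by_contra hcon
  push_neg at hcon
  choose A hA hnP using hcon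
  have hΨcof : Cardinal.mk Ψ < lam.ord.cof := lt_of_le_of_lt hΨ hcf
  have hcofle : lam.ord.cof ≤ lam := Ordinal.cof_ord_le lam
  have hlam : Cardinal.aleph0 ≤ lam := le_trans hθ (le_of_lt (lt_of_lt_of_le hcf hcofle))
  have hsup : (⨆ ψ, Cardinal.mk (A ψ)) < lam :=
    Ordinal.iSup_lt hΨcof hA
  have hU : Cardinal.mk ↥(⋃ ψ, A ψ) < lam := by
    refine lt_of_le_of_lt (Cardinal.mk_iUnion_le A) ?_
    exact Cardinal.mul_lt_of_lt hlam (lt_of_lt_of_le hΨcof hcofle) hsup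
  obtain ⟨ψ, hψ⟩ := h _ hU
  exact hnP ψ (hmono ψ _ _ hψ (Set.subset_iUnion A ψ))
end

section
/- Assume some subset A ⊆ M admits no e with Sol(e, A), and let λ be the least cardinality of such a subset A. If λ > θ, then λ is a regular cardinal. -/
/-!
If `cf λ < λ`, split a set `A` of size `λ` without witness into `cf λ` pieces of size `< λ`.
By minimality of `λ` each piece has a witness of size `≤ θ`; the union of these witnesses has
size `≤ cf λ · θ < λ`, so it has a witness itself, which transitivity turns into a witness for `A`.
-/

universe u

open Cardinal Set

theorem Cardinal.exists_cof_iUnion_eq_univ_mk_lt {α : Type u} (hα : ℵ₀ ≤ #α) :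
    ∃ (ι : Type u) (B : ι → Set α),
      #ι = (#α).ord.cof ∧ ⋃ i, B i = Set.univ ∧ ∀ i, #(B i) < #α := by
  obtain ⟨_, _, hord⟩ := exists_ord_eq_type_lt α
  obtain ⟨s, hs, hs_card⟩ := Order.exists_cof_eq α
  refine ⟨s, fun i => Iic i.1, by rw [hs_card, hord, Ordinal.cof_type], ?_,
    fun i => mk_Iic_lt _ hord hα⟩
  rw [← isCofinal_iff_iUnion_Iic_eq_univ.1 hs, iUnion_coe_set]

theorem Set.exists_cof_iUnion_eq_mk_lt {α : Type u} {A : Set α} (hA : ℵ₀ ≤ #A) :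
    ∃ (ι : Type u) (B : ι → Set α),
      #ι = (#A).ord.cof ∧ ⋃ i, B i = A ∧ ∀ i, #(B i) < #A := by
  obtain ⟨ι, B, hι, hB_union, hB_card⟩ := exists_cof_iUnion_eq_univ_mk_lt hA
  refine ⟨ι, fun i => (↑) '' B i, hι, ?_, fun i => ?_⟩
  · rw [← image_iUnion, hB_union, Subtype.coe_image_univ]
  · rw [mk_image_eq Subtype.val_injective]
    exact hB_card i

theorem Cardinal.mk_iUnion_lt_of_mk_le {ι α : Type u} {f : ι → Set α} {θ κ : Cardinal.{u}}
    (hκ : ℵ₀ ≤ κ) (hι : #ι < κ) (hθ : θ < κ) (hf : ∀ i, #(f i) ≤ θ) :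
    #(⋃ i, f i) < κ :=
  (mk_iUnion_le f).trans_lt (mul_lt_of_lt hκ hι ((ciSup_le' hf).trans_lt hθ))

theorem stmt_1_general {M : Type u} (θ : Cardinal.{u}) (hθ : Cardinal.aleph0 ≤ θ)
    (Sol : Set M → Set M → Prop)
    (hcard : ∀ e A : Set M, Sol e A → Cardinal.mk ↥e ≤ θ)
    (htrans : ∀ (I : Type u) (eF AF : I → Set M) (e : Set M),
      (∀ i, Sol (eF i) (AF i)) → Sol e (⋃ i, eF i) → Sol e (⋃ i, AF i))
    (lam : Cardinal.{u})
    (hwit : ∃ A : Set M, Cardinal.mk ↥A = lam ∧ ∀ e, ¬ Sol e A)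
    (hleast : ∀ A : Set M, (∀ e, ¬ Sol e A) → lam ≤ Cardinal.mk ↥A)
    (hlθ : θ < lam) :
    lam.IsRegular := by
  have hlam : ℵ₀ ≤ lam := hθ.trans hlθ.le
  have hsolvable : ∀ B : Set M, #B < lam → ∃ e, Sol e B := fun B hB => by
    by_contra! h
    exact (hleast B h).not_gt hB
  refine ⟨hlam, le_of_not_gt fun hcof => ?_⟩
  obtain ⟨A, rfl, hA⟩ := hwit
  obtain ⟨ι, B, hι, hB_union, hB_card⟩ := exists_cof_iUnion_eq_mk_lt hlam
  choose eF heF using fun i => hsolvable (B i) (hB_card i)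
  obtain ⟨e, he⟩ := hsolvable (⋃ i, eF i)
    (mk_iUnion_lt_of_mk_le hlam (hι ▸ hcof) hlθ fun i => hcard _ _ (heF i))
  exact hA e (hB_union ▸ htrans ι eF B e heF he)

/-- Regularity of the non-transitivity cardinal (Shelah 950, Observation b47(1)):
`Sol` relates witness sets `e ⊆ M` of cardinality `≤ θ` to arbitrary subsets `A ⊆ M`,
is monotone (downward in `A`) and transitive; if some subset admits no witness and
`λ` is the least cardinality of such a subset, then `λ > θ` implies `λ` is regular. -/
theorem stmt_1 {M : Type u} (θ : Cardinal.{u}) (hθ : Cardinal.aleph0 ≤ θ)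
    (Sol : Set M → Set M → Prop)
    (hcard : ∀ e A : Set M, Sol e A → Cardinal.mk ↥e ≤ θ)
    (hmono : ∀ e A B : Set M, Sol e A → B ⊆ A → Sol e B)
    (htrans : ∀ (I : Type u) (eF AF : I → Set M) (e : Set M),
      (∀ i, Sol (eF i) (AF i)) → Sol e (⋃ i, eF i) → Sol e (⋃ i, AF i))
    (lam : Cardinal.{u})
    (hwit : ∃ A : Set M, Cardinal.mk ↥A = lam ∧ ∀ e, ¬ Sol e A)
    (hleast : ∀ A : Set M, (∀ e, ¬ Sol e A) → lam ≤ Cardinal.mk ↥A)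
    (hlθ : θ < lam) :
    lam.IsRegular :=
  stmt_1_general θ hθ Sol hcard htrans lam hwit hleast hlθ
end

section
/- If some subset A ⊆ M admits no finite p with Sol(p, A), then the least cardinality λ of such a subset A is an infinite regular cardinal. -/
/-!
Every set of size `< λ` is solvable, and `λ` is infinite since finite sets are solvable. If `λ`
were singular, a witness `A` of size `λ` would be covered by fewer than `λ` pieces of size `< λ`
(initial segments of a well-order of `A` of type `λ`, cut at a cofinal set of size `cf λ`).
Solving each piece by a finite `pᵢ`, the union of the `pᵢ` has size `≤ cf λ · ℵ₀ < λ`, so it is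
solved by some `q`; transitivity makes `q` solve the union of the pieces, hence `A`.
-/

universe u

open Cardinal Set

namespace Cardinal

theorem IsSingular.aleph0_lt {c : Cardinal} (hc : c.IsSingular) : ℵ₀ < c :=
  hc.aleph0_le.lt_of_ne fun h ↦ not_isSingular_aleph0 (h ▸ hc)

theorem IsSingular.exists_iUnion_eq_univ {α : Type u} (hα : (#α).IsSingular) :
    ∃ (ι : Type u) (t : ι → Set α), #ι < #α ∧ (∀ i, #(t i) < #α) ∧ ⋃ i, t i = Set.univ := by
  obtain ⟨_, _, hord⟩ := exists_ord_eq_type_lt α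
  obtain ⟨S, hS, hScard⟩ := Order.exists_cof_eq α
  refine ⟨S, fun s ↦ Iic (s : α), ?_, fun s ↦ mk_Iic_lt _ hord hα.aleph0_le, ?_⟩
  · rw [hScard, ← Ordinal.cof_type, ← hord]
    exact hα.cof_ord_lt
  · refine eq_univ_of_forall fun a ↦ ?_
    obtain ⟨s, hs, has⟩ := hS a
    exact mem_iUnion.2 ⟨⟨s, hs⟩, has⟩

end Cardinal

section Solvability

variable {M : Type u} {Sol : Finset M → Set M → Prop}

theorem exists_sol_iUnion_of_forall_mk_lt
    (htrans : ∀ (I : Type u) (pF : I → Finset M) (AF : I → Set M) (q : Finset M),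
      (∀ i, Sol (pF i) (AF i)) → Sol q (⋃ i, (pF i : Set M)) → Sol q (⋃ i, AF i))
    {κ : Cardinal.{u}} (hκ : ℵ₀ < κ) (hsmall : ∀ B : Set M, #B < κ → ∃ p, Sol p B)
    {ι : Type u} {t : ι → Set M} (hι : #ι < κ) (ht : ∀ i, #(t i) < κ) :
    ∃ q, Sol q (⋃ i, t i) := by
  choose p hp using fun i ↦ hsmall (t i) (ht i)
  have hp_small : #(⋃ i, (p i : Set M)) < κ :=
    (mk_iUnion_le _).trans_lt <| mul_lt_of_lt hκ.le hι <|
      (ciSup_le' fun i ↦ (p i).finite_toSet.lt_aleph0.le).trans_lt hκ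
  obtain ⟨q, hq⟩ := hsmall _ hp_small
  exact ⟨q, htrans ι p t q hp hq⟩

end Solvability

/-- Regularity of the weak non-transitivity cardinal (Shelah 950, Claim n10(1)):
`Sol` relates finite subsets `p` of `M` to arbitrary subsets `A ⊆ M`, is monotone,
transitive, and every finite set is solvable; if some subset admits no finite solver,
then the least cardinality of such a subset is an infinite regular cardinal. -/
theorem stmt_2 {M : Type u}
    (Sol : Finset M → Set M → Prop)
    (hmono : ∀ (p : Finset M) (A B : Set M), Sol p A → B ⊆ A → Sol p B)
    (htrans : ∀ (I : Type u) (pF : I → Finset M) (AF : I → Set M) (q : Finset M),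
      (∀ i, Sol (pF i) (AF i)) → Sol q (⋃ i, (pF i : Set M)) → Sol q (⋃ i, AF i))
    (hfin : ∀ A : Finset M, ∃ p, Sol p (A : Set M))
    (lam : Cardinal.{u})
    (hwit : ∃ A : Set M, Cardinal.mk ↥A = lam ∧ ∀ p, ¬ Sol p A)
    (hleast : ∀ A : Set M, (∀ p, ¬ Sol p A) → lam ≤ Cardinal.mk ↥A) :
    lam.IsRegular := by
  obtain ⟨A, rfl, hA⟩ := hwit
  have hsmall : ∀ B : Set M, #B < #A → ∃ p, Sol p B := fun B hB ↦ by
    by_contra! h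
    exact (hleast B h).not_gt hB
  have hinf : ℵ₀ ≤ #A := by
    by_contra! h
    have hAfin : A.Finite := lt_aleph0_iff_set_finite.1 h
    obtain ⟨p, hp⟩ := hfin hAfin.toFinset
    exact hA p (by simpa using hp)
  by_contra hreg
  have hsing := IsSingular.of_not_isRegular hinf hreg
  obtain ⟨ι, t, hι, ht, hcover⟩ := hsing.exists_iUnion_eq_univ
  obtain ⟨q, hq⟩ := exists_sol_iUnion_of_forall_mk_lt htrans hsing.aleph0_lt hsmall
    (t := fun i ↦ (↑) '' t i) hι fun i ↦ mk_image_le.trans_lt (ht i)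
  refine hA q (hmono q _ A hq ?_)
  rw [← image_iUnion, hcover, image_univ, Subtype.range_coe]
end

section
/- The sequence ⟨ā_α : α < δ⟩ is an indiscernible sequence over B, i.e. for all n and all increasing tuples α₀ < … < α_{n−1} < δ and β₀ < … < β_{n−1} < δ, the tuples ā_{α₀}⌢…⌢ā_{α_{n−1}} and ā_{β₀}⌢…⌢ā_{β_{n−1}} realize the same type over B in N. -/
universe v

open FirstOrder

/-- `b` and `c` realize the same type over `B` in the ambient structure. -/
def EqTypeOver (L : Language) {N : Type*} [L.Structure N] (B : Set N)
    {α : Type*} (b c : α → N) : Prop :=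
  ∀ (j : ℕ) (ψ : L.Formula (α ⊕ Fin j)) (d : Fin j → N),
    (∀ i, d i ∈ B) →
    (ψ.Realize (Sum.elim b d) ↔ ψ.Realize (Sum.elim c d))

namespace Stmt5Aux

variable {L : Language} {N : Type*} [L.Structure N]

lemma eqTypeOver_refl {B : Set N} {α : Type*} (b : α → N) :
    EqTypeOver L B b b := fun _ _ _ _ => Iff.rfl

lemma eqTypeOver_symm {B : Set N} {α : Type*} {b c : α → N}
    (h : EqTypeOver L B b c) : EqTypeOver L B c b :=
  fun j ψ d hd => (h j ψ d hd).symm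

lemma eqTypeOver_trans {B : Set N} {α : Type*} {b c e : α → N}
    (h1 : EqTypeOver L B b c) (h2 : EqTypeOver L B c e) : EqTypeOver L B b e :=
  fun j ψ d hd => (h1 j ψ d hd).trans (h2 j ψ d hd)

/-- Relabeling of variables: view the first `n` blocks together with the `j`
parameters as a single parameter tuple, and the last block as the free variables. -/
def reIdx (n m j : ℕ) : (Fin (n + 1) × Fin m) ⊕ Fin j → Fin m ⊕ Fin (n * m + j)
  | Sum.inl (i, q) =>
      if hi : (i : ℕ) < n then
        Sum.inr (finSumFinEquiv (Sum.inl (finProdFinEquiv (⟨(i : ℕ), hi⟩, q))))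
      else Sum.inl q
  | Sum.inr t => Sum.inr (finSumFinEquiv (Sum.inr t))

/-- The combined parameter tuple. -/
def par {n m j : ℕ} (u : Fin n × Fin m → N) (d : Fin j → N) : Fin (n * m + j) → N :=
  fun s => Sum.elim (fun w => u (finProdFinEquiv.symm w)) d (finSumFinEquiv.symm s)

lemma val_eq {n m j : ℕ} (u : Fin n × Fin m → N) (x : Fin m → N) (d : Fin j → N)
    (t : Fin (n + 1) × Fin m → N)
    (ht1 : ∀ (i : Fin n) (q : Fin m), t (i.castSucc, q) = u (i, q))
    (ht2 : ∀ q, t (Fin.last n, q) = x q) :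
    Sum.elim t d = (Sum.elim x (par u d)) ∘ reIdx n m j := by
  funext s
  rcases s with ⟨i, q⟩ | t'
  · simp only [Function.comp, reIdx, Sum.elim_inl]
    split_ifs with hi
    · have hcast : (⟨(i : ℕ), hi⟩ : Fin n).castSucc = i := Fin.ext rfl
      simp only [Sum.elim_inr, par, Equiv.symm_apply_apply, Sum.elim_inl,
        Equiv.symm_apply_apply]
      rw [← ht1 ⟨(i : ℕ), hi⟩ q, hcast]
    · have hlast : i = Fin.last n :=
        Fin.ext (le_antisymm (Nat.lt_succ_iff.mp i.2) (not_lt.mp hi))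
      simp only [Sum.elim_inl, hlast, ht2]
  · simp only [Function.comp, reIdx, Sum.elim_inr, par, Equiv.symm_apply_apply]

lemma par_mem {B T : Set N} {n m j : ℕ} {u : Fin n × Fin m → N} {d : Fin j → N}
    (hu : ∀ p, u p ∈ B ∪ T) (hd : ∀ t, d t ∈ B) :
    ∀ s, par u d s ∈ B ∪ T := by
  intro s
  unfold par
  rcases finSumFinEquiv.symm s with w | t
  · exact hu _
  · exact Or.inl (hd t)

/-- Relabeling used to show that combined parameter tuples have equal types. -/
def reIdx2 (n m j j' : ℕ) : Fin (n * m + j) ⊕ Fin j' → (Fin n × Fin m) ⊕ Fin (j + j')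
  | Sum.inl s =>
      Sum.elim (fun w => Sum.inl (finProdFinEquiv.symm w))
        (fun t => Sum.inr (finSumFinEquiv (Sum.inl t))) (finSumFinEquiv.symm s)
  | Sum.inr t' => Sum.inr (finSumFinEquiv (Sum.inr t'))

lemma par_eqTypeOver {B : Set N} {n m j : ℕ} {u v : Fin n × Fin m → N} {d : Fin j → N}
    (huv : EqTypeOver L B u v) (hd : ∀ t, d t ∈ B) :
    EqTypeOver L B (par u d) (par v d) := by
  intro j' ψ d' hd'
  have key : ∀ (w : Fin n × Fin m → N),
      Sum.elim (par w d) d' =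
        (Sum.elim w (fun s => Sum.elim d d' (finSumFinEquiv.symm s))) ∘ reIdx2 n m j j' := by
    intro w
    funext s
    rcases s with s | t'
    · simp only [Function.comp, reIdx2, Sum.elim_inl, par]
      rcases finSumFinEquiv.symm s with w' | t
      · simp
      · simp
    · simp only [Function.comp, reIdx2, Sum.elim_inr, Equiv.symm_apply_apply]
  rw [key u, key v, ← Language.Formula.realize_relabel, ← Language.Formula.realize_relabel]
  refine huv (j + j') (ψ.relabel (reIdx2 n m j j')) _ ?_
  intro s
  rcases finSumFinEquiv.symm s with t | t'
  · exact hd t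
  · exact hd' t'

end Stmt5Aux

open Stmt5Aux

/-- Shelah 950, Claim c42 (basic case): if `⟨ā_α : α < δ⟩` is a sequence of `m`-tuples
such that for `β < α < δ` the tuple `ā_α` realizes `tp(ā_β, B ∪ ⋃_{γ<β} ā_γ)`, and
each `tp(ā_α, B ∪ ⋃_{γ<α} ā_γ)` does not split over `B`, then the sequence is
indiscernible over `B`. -/
theorem stmt_5 {L : Language} {N : Type*} [L.Structure N]
    (B : Set N) (m : ℕ) (δ : Ordinal.{v}) (a : Ordinal.{v} → Fin m → N)
    (hinc : ∀ β α : Ordinal.{v}, β < α → α < δ →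
      ∀ (k : ℕ) (φ : L.Formula (Fin m ⊕ Fin k)) (d : Fin k → N),
        (∀ i, d i ∈ B ∪ {x | ∃ γ < β, ∃ j, a γ j = x}) →
        φ.Realize (Sum.elim (a β) d) → φ.Realize (Sum.elim (a α) d))
    (hns : ∀ α : Ordinal.{v}, α < δ →
      ∀ (k : ℕ) (φ : L.Formula (Fin m ⊕ Fin k)) (b c : Fin k → N),
        (∀ i, b i ∈ B ∪ {x | ∃ γ < α, ∃ j, a γ j = x}) →
        (∀ i, c i ∈ B ∪ {x | ∃ γ < α, ∃ j, a γ j = x}) →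
        EqTypeOver L B b c →
        (φ.Realize (Sum.elim (a α) b) ↔ φ.Realize (Sum.elim (a α) c))) :
    ∀ (n : ℕ) (f g : Fin n → Ordinal.{v}), StrictMono f → StrictMono g →
      (∀ i, f i < δ) → (∀ i, g i < δ) →
      EqTypeOver L B (fun p : Fin n × Fin m => a (f p.1) p.2)
        (fun p : Fin n × Fin m => a (g p.1) p.2) := by
  -- Lemma A: the last coordinate can be moved down (over the earlier blocks),
  -- by `hinc`.
  have lemA : ∀ (n : ℕ) (h : Fin n → Ordinal.{v}) (β γ : Ordinal.{v}),
      (∀ i, h i < β) → β ≤ γ → γ < δ →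
      EqTypeOver L B (fun p : Fin (n + 1) × Fin m => a ((Fin.snoc h γ : Fin (n+1) → Ordinal.{v}) p.1) p.2)
        (fun p : Fin (n + 1) × Fin m => a ((Fin.snoc h β : Fin (n+1) → Ordinal.{v}) p.1) p.2) := by
    intro n h β γ hh hβγ hγδ
    rcases eq_or_lt_of_le hβγ with rfl | hlt
    · exact eqTypeOver_refl _
    intro j ψ d hd
    have hu : ∀ p : Fin n × Fin m,
        (fun p : Fin n × Fin m => a (h p.1) p.2) p ∈
          B ∪ {x | ∃ γ' < β, ∃ j', a γ' j' = x} :=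
      fun p => Or.inr ⟨h p.1, hh p.1, p.2, rfl⟩
    have hval : ∀ (x : Ordinal.{v}),
        Sum.elim (fun p : Fin (n + 1) × Fin m => a ((Fin.snoc h x : Fin (n+1) → Ordinal.{v}) p.1) p.2) d =
          (Sum.elim (a x) (par (fun p : Fin n × Fin m => a (h p.1) p.2) d)) ∘
            reIdx n m j := by
      intro x
      refine val_eq _ _ _ _ ?_ ?_
      · intro i q; simp [Fin.snoc_castSucc]
      · intro q; simp [Fin.snoc_last]
    rw [hval γ, hval β, ← Language.Formula.realize_relabel, ← Language.Formula.realize_relabel]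
    have hmem := par_mem (B := B) (T := {x | ∃ γ' < β, ∃ j', a γ' j' = x})
      hu hd
    constructor
    · intro hreal
      by_contra hβr
      have hnot : (ψ.relabel (reIdx n m j)).not.Realize
          (Sum.elim (a β) (par (fun p : Fin n × Fin m => a (h p.1) p.2) d)) := by
        rw [Language.Formula.realize_not]; exact hβr
      have := hinc β γ hlt hγδ _ (ψ.relabel (reIdx n m j)).not _ hmem hnot
      rw [Language.Formula.realize_not] at this
      exact this hreal
    · exact hinc β γ hlt hγδ _ (ψ.relabel (reIdx n m j)) _ hmem
  -- Main induction on the length of the tuple.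
  intro n
  induction n with
  | zero =>
    intro f g _ _ _ _
    have : (fun p : Fin 0 × Fin m => a (f p.1) p.2) =
        (fun p : Fin 0 × Fin m => a (g p.1) p.2) :=
      funext fun p => p.1.elim0
    rw [this]
    exact eqTypeOver_refl _
  | succ n ih =>
    intro f g hf hg hfδ hgδ
    set f' : Fin n → Ordinal.{v} := f ∘ Fin.castSucc with hf'def
    set g' : Fin n → Ordinal.{v} := g ∘ Fin.castSucc with hg'def
    have hf'mono : StrictMono f' := fun i j hij => hf (by simpa using hij)
    have hg'mono : StrictMono g' := fun i j hij => hg (by simpa using hij)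
    have hf'δ : ∀ i, f' i < δ := fun i => hfδ _
    have hg'δ : ∀ i, g' i < δ := fun i => hgδ _
    have hIH := ih f' g' hf'mono hg'mono hf'δ hg'δ
    set α : Ordinal.{v} := max (f (Fin.last n)) (g (Fin.last n)) with hαdef
    have hαδ : α < δ := max_lt (hfδ _) (hgδ _)
    have hf'α : ∀ i, f' i < α :=
      fun i => lt_of_lt_of_le (hf (Fin.castSucc_lt_last i)) (le_max_left _ _)
    have hg'α : ∀ i, g' i < α :=
      fun i => lt_of_lt_of_le (hg (Fin.castSucc_lt_last i)) (le_max_right _ _)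
    have hf'last : ∀ i, f' i < f (Fin.last n) := fun i => hf (Fin.castSucc_lt_last i)
    have hg'last : ∀ i, g' i < g (Fin.last n) := fun i => hg (Fin.castSucc_lt_last i)
    -- Lemma B: swapping the first `n` blocks under the common last block `ā_α`.
    have lemB : EqTypeOver L B
        (fun p : Fin (n + 1) × Fin m => a ((Fin.snoc f' α : Fin (n+1) → Ordinal.{v}) p.1) p.2)
        (fun p : Fin (n + 1) × Fin m => a ((Fin.snoc g' α : Fin (n+1) → Ordinal.{v}) p.1) p.2) := by
      intro j ψ d hd
      have hval : ∀ (h : Fin n → Ordinal.{v}),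
          Sum.elim (fun p : Fin (n + 1) × Fin m => a ((Fin.snoc h α : Fin (n+1) → Ordinal.{v}) p.1) p.2) d =
            (Sum.elim (a α) (par (fun p : Fin n × Fin m => a (h p.1) p.2) d)) ∘
              reIdx n m j := by
        intro h
        refine val_eq _ _ _ _ ?_ ?_
        · intro i q; simp [Fin.snoc_castSucc]
        · intro q; simp [Fin.snoc_last]
      rw [hval f', hval g', ← Language.Formula.realize_relabel, ← Language.Formula.realize_relabel]
      refine hns α hαδ _ (ψ.relabel (reIdx n m j)) _ _ ?_ ?_ ?_
      · exact par_mem (fun p => Or.inr ⟨f' p.1, hf'α p.1, p.2, rfl⟩) hd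
      · exact par_mem (fun p => Or.inr ⟨g' p.1, hg'α p.1, p.2, rfl⟩) hd
      · exact par_eqTypeOver hIH hd
    have hfeq : (fun p : Fin (n + 1) × Fin m => a (f p.1) p.2) =
        (fun p : Fin (n + 1) × Fin m => a ((Fin.snoc f' (f (Fin.last n)) : Fin (n+1) → Ordinal.{v}) p.1) p.2) := by
      funext p
      obtain ⟨i, q⟩ := p
      induction i using Fin.lastCases with
      | last => simp [Fin.snoc_last]
      | cast i => simp [Fin.snoc_castSucc, hf'def]
    have hgeq : (fun p : Fin (n + 1) × Fin m => a (g p.1) p.2) =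
        (fun p : Fin (n + 1) × Fin m => a ((Fin.snoc g' (g (Fin.last n)) : Fin (n+1) → Ordinal.{v}) p.1) p.2) := by
      funext p
      obtain ⟨i, q⟩ := p
      induction i using Fin.lastCases with
      | last => simp [Fin.snoc_last]
      | cast i => simp [Fin.snoc_castSucc, hg'def]
    rw [hfeq, hgeq]
    refine eqTypeOver_trans (eqTypeOver_symm
      (lemA n f' (f (Fin.last n)) α hf'last (le_max_left _ _) hαδ))
      (eqTypeOver_trans lemB
        (lemA n g' (g (Fin.last n)) α hg'last (le_max_right _ _) hαδ))
end

section
/- There is a partition of I into finitely many D-positive sets S₀, …, S_{m−1} (with m ≤ 2^{n−1} when n ≥ 1) such that for every A ∈ 𝒜 there exists k < m and a truth value t with: S_k ∖ A is D-null if t = 1, and S_k ∩ A is D-null if t = 0 (i.e. A is decided modulo D on the cell S_k). -/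
/-! Take `j` maximal such that some `A₀, …, A_{j-1} ∈ 𝒜` have all `2ʲ` Boolean cells `D`-positive;
then `j < n`, and these cells partition `I`. Given `B ∈ 𝒜`, the family `A₀, …, A_{j-1}, B` has
some `D`-null cell by maximality; that cell is `C ∩ B` or `C \ B` for a cell `C` of the
`Aᵢ`, so `B` is decided modulo `D` on `C`. -/

open Set

theorem Nat.exists_lt_and_not_succ {p : ℕ → Prop} {n : ℕ} (h0 : p 0) (hn : ¬ p n) :
    ∃ j < n, p j ∧ ¬ p (j + 1) := by
  induction n with
  | zero => exact absurd h0 hn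
  | succ n ih =>
    by_cases hpn : p n
    · exact ⟨n, n.lt_succ_self, hpn, hn⟩
    · obtain ⟨j, hjn, hj⟩ := ih hpn
      exact ⟨j, hjn.trans n.lt_succ_self, hj⟩

section BoolCell

variable {I : Type*} {j : ℕ}

def boolCell (A : Fin j → Set I) (η : Fin j → Bool) : Set I :=
  ⋂ k, cond (η k) (A k) (A k)ᶜ

theorem mem_boolCell_iff {A : Fin j → Set I} {η : Fin j → Bool} {x : I} :
    x ∈ boolCell A η ↔ ∀ k, (η k ↔ x ∈ A k) := by
  simp only [boolCell, mem_iInter]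
  refine forall_congr' fun k => ?_
  cases η k <;> simp

theorem boolCell_zero (A : Fin 0 → Set I) (η : Fin 0 → Bool) : boolCell A η = univ :=
  iInter_of_empty _

theorem pairwise_disjoint_boolCell (A : Fin j → Set I) :
    Pairwise fun η η' => Disjoint (boolCell A η) (boolCell A η') := by
  intro η η' hne
  refine disjoint_left.mpr fun x hx hx' => hne (funext fun k => ?_)
  exact Bool.eq_iff_iff.mpr ((mem_boolCell_iff.mp hx k).trans (mem_boolCell_iff.mp hx' k).symm)

theorem iUnion_boolCell (A : Fin j → Set I) : ⋃ η, boolCell A η = univ := by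
  classical
  exact eq_univ_of_forall fun x =>
    mem_iUnion.mpr ⟨fun k => decide (x ∈ A k), mem_boolCell_iff.mpr fun _ => decide_eq_true_iff⟩

theorem boolCell_snoc (A : Fin j → Set I) (B : Set I) (η : Fin j → Bool) (b : Bool) :
    boolCell (Fin.snoc A B : Fin (j + 1) → Set I) (Fin.snoc η b) =
      boolCell A η ∩ cond b B Bᶜ := by
  ext x
  simp only [boolCell, mem_inter_iff, mem_iInter, Fin.forall_fin_succ', Fin.snoc_castSucc,
    Fin.snoc_last]

end BoolCell

def HasIndependentMod {I : Type*} (D : Filter I) (𝒜 : Set (Set I)) (j : ℕ) : Prop :=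
  ∃ A : Fin j → Set I, (∀ k, A k ∈ 𝒜) ∧ ∀ η, (boolCell A η)ᶜ ∉ D

theorem hasIndependentMod_zero {I : Type*} (D : Filter I) [D.NeBot] (𝒜 : Set (Set I)) :
    HasIndependentMod D 𝒜 0 :=
  ⟨Fin.elim0, fun k => k.elim0, fun η => by
    rw [boolCell_zero, compl_univ]
    exact Filter.empty_notMem D⟩

theorem exists_boolCell_decides {I : Type*} {D : Filter I} {𝒜 : Set (Set I)} {j : ℕ}
    (hmax : ¬ HasIndependentMod D 𝒜 (j + 1)) {A : Fin j → Set I} (hA : ∀ k, A k ∈ 𝒜)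
    {B : Set I} (hB : B ∈ 𝒜) :
    ∃ η, (boolCell A η \ B)ᶜ ∈ D ∨ (boolCell A η ∩ B)ᶜ ∈ D := by
  have hA' : ∀ k, (Fin.snoc A B : Fin (j + 1) → Set I) k ∈ 𝒜 :=
    Fin.lastCases (by rwa [Fin.snoc_last]) fun k => by rw [Fin.snoc_castSucc]; exact hA k
  obtain ⟨η', hnull⟩ : ∃ η', (boolCell (Fin.snoc A B : Fin (j + 1) → Set I) η')ᶜ ∈ D := by
    by_contra! hpos
    exact hmax ⟨_, hA', hpos⟩
  rw [← Fin.snoc_init_self η', boolCell_snoc] at hnull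
  refine ⟨Fin.init η', ?_⟩
  cases hb : η' (Fin.last j) <;> rw [hb] at hnull
  · exact Or.inl hnull
  · exact Or.inr hnull

theorem stmt_7_general {I : Type*} (D : Filter I) [D.NeBot] (𝒜 : Set (Set I)) (n : ℕ)
    (h : ¬ ∃ A : Fin n → Set I, (∀ k, A k ∈ 𝒜) ∧
        ∀ η : Fin n → Bool, (⋂ k, cond (η k) (A k) (A k)ᶜ)ᶜ ∉ D) :
    ∃ (m : ℕ) (S : Fin m → Set I),
      m ≤ 2 ^ (n - 1) ∧
      (∀ k, (S k)ᶜ ∉ D) ∧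
      (∀ k l, k ≠ l → Disjoint (S k) (S l)) ∧
      (⋃ k, S k) = Set.univ ∧
      (∀ A ∈ 𝒜, ∃ k, (S k \ A)ᶜ ∈ D ∨ (S k ∩ A)ᶜ ∈ D) := by
  obtain ⟨j, hjn, ⟨A, hA𝒜, hApos⟩, hmax⟩ :=
    Nat.exists_lt_and_not_succ (hasIndependentMod_zero D 𝒜) h
  let e : (Fin j → Bool) ≃ Fin (2 ^ j) := Fintype.equivFinOfCardEq (by simp)
  refine ⟨2 ^ j, fun k => boolCell A (e.symm k), Nat.pow_le_pow_right two_pos (by omega),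
    fun k => hApos _, fun k l hkl => pairwise_disjoint_boolCell A (e.symm.injective.ne hkl),
    (e.symm.surjective.iUnion_comp (boolCell A)).trans (iUnion_boolCell A), fun B hB => ?_⟩
  obtain ⟨η, hη⟩ := exists_boolCell_decides hmax hA𝒜 hB
  exact ⟨e η, by simpa using hη⟩

/-- Shelah 950, Claim d23(1) (combinatorial content): let `D` be a proper filter on `I`
and `𝒜` a family of subsets; if no `n` sets from `𝒜` have all `2ⁿ` Boolean combination
cells `D`-positive (`n ≥ 1`), then `I` can be partitioned into `m ≤ 2^(n-1)` `D`-positive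
sets `S₀, …, S_{m-1}` such that every `A ∈ 𝒜` is decided modulo `D` on some cell. -/
theorem stmt_7 {I : Type*} (D : Filter I) [D.NeBot] (𝒜 : Set (Set I)) (n : ℕ)
    (hn : 1 ≤ n)
    (h : ¬ ∃ A : Fin n → Set I, (∀ k, A k ∈ 𝒜) ∧
        ∀ η : Fin n → Bool, (⋂ k, cond (η k) (A k) (A k)ᶜ)ᶜ ∉ D) :
    ∃ (m : ℕ) (S : Fin m → Set I),
      m ≤ 2 ^ (n - 1) ∧
      (∀ k, (S k)ᶜ ∉ D) ∧
      (∀ k l, k ≠ l → Disjoint (S k) (S l)) ∧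
      (⋃ k, S k) = Set.univ ∧
      (∀ A ∈ 𝒜, ∃ k, (S k \ A)ᶜ ∈ D ∨ (S k ∩ A)ᶜ ∈ D) :=
  stmt_7_general D 𝒜 n h
end

section
/- For every cardinal θ < κ, the cardinality of M is at least 2^θ. -/
universe u

open Set Cardinal

/-!
Fix a well-order `ι` of cardinality `θ` and read `s : ι → Bool` as a branch of the binary tree of
height `θ`. Along `s`, choose by recursion the node at level `j` strictly between the earlier nodes
where `s` turned right and those where it turned left; saturation makes this possible since fewer
than `κ` points are involved, and the node depends only on `s` below `j`. Saturation then also gives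
a point realizing the whole branch. Two branches first differing at `i` share the node at level `i`,
and their points lie on opposite sides of it, so the branch points are lexicographically ordered
and there are `2 ^ θ` of them.
-/

def CutsFilled (ι M : Type*) [LT M] : Prop :=
  ∀ (f : ι → M) (L R : Set ι), (∀ i ∈ L, ∀ k ∈ R, f i < f k) →
    ∃ m, (∀ i ∈ L, f i < m) ∧ ∀ k ∈ R, m < f k

theorem cutsFilled_of_saturated {ι M : Type u} [LT M] {κ : Cardinal.{u}} (hι : #ι < κ)
    (hsat : ∀ A B : Set M, #A < κ → #B < κ → (∀ a ∈ A, ∀ b ∈ B, a < b) →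
      ∃ m, (∀ a ∈ A, a < m) ∧ ∀ b ∈ B, m < b) :
    CutsFilled ι M := by
  intro f L R hLR
  have hsmall (S : Set ι) : #(f '' S) < κ := (mk_image_le.trans (mk_set_le S)).trans_lt hι
  simpa only [forall_mem_image] using
    hsat _ _ (hsmall L) (hsmall R) (by simpa only [forall_mem_image] using hLR)

theorem lt_of_eq_true_of_eq_false {ι M : Type*} [LinearOrder ι] [LT M] {f : ι → M}
    {s : ι → Bool} {i k : ι} (hik : i < k → s i = true → f i < f k)
    (hki : k < i → s k = false → f i < f k) (hi : s i = true) (hk : s k = false) :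
    f i < f k := by
  rcases lt_trichotomy i k with h | rfl | h
  · exact hik h hi
  · simp_all
  · exact hki h hk

section BranchTree

variable {ι M : Type*} [LinearOrder M] [Nonempty M]

noncomputable def cutPoint (A B : Set M) : M :=
  Classical.epsilon fun m => (∀ a ∈ A, a < m) ∧ ∀ b ∈ B, m < b

theorem cutPoint_image_spec {f : ι → M} {L R : Set ι} (h : CutsFilled ι M)
    (hLR : ∀ i ∈ L, ∀ k ∈ R, f i < f k) :
    (∀ i ∈ L, f i < cutPoint (f '' L) (f '' R)) ∧ ∀ k ∈ R, cutPoint (f '' L) (f '' R) < f k := by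
  obtain ⟨hL, hR⟩ := Classical.epsilon_spec
    (p := fun m => (∀ a ∈ f '' L, a < m) ∧ ∀ b ∈ f '' R, m < b)
    (by simpa only [forall_mem_image] using h f L R hLR)
  exact ⟨fun i hi => hL _ (mem_image_of_mem f hi), fun k hk => hR _ (mem_image_of_mem f hk)⟩

variable [LinearOrder ι] [WellFoundedLT ι]

noncomputable def branchNode (s : ι → Bool) : ι → M :=
  wellFounded_lt.fix fun _ IH =>
    cutPoint {x | ∃ i h, s i = true ∧ IH i h = x} {x | ∃ i h, s i = false ∧ IH i h = x}

theorem branchNode_eq (s : ι → Bool) (j : ι) :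
    branchNode (M := M) s j = cutPoint (branchNode s '' {i | i < j ∧ s i = true})
      (branchNode s '' {i | i < j ∧ s i = false}) := by
  rw [branchNode, WellFounded.fix_eq]
  simp only [image, mem_ofPred_eq, and_assoc, exists_prop]

theorem branchNode_lt (h : CutsFilled ι M) (s : ι → Bool) {i j : ι} (hij : i < j) :
    (s i = true → branchNode (M := M) s i < branchNode s j) ∧
      (s i = false → branchNode (M := M) s j < branchNode s i) := by
  induction j using WellFoundedLT.induction generalizing i with
  | _ j ih =>
  have hcut := cutPoint_image_spec (f := branchNode (M := M) s)
    (L := {i | i < j ∧ s i = true}) (R := {i | i < j ∧ s i = false}) h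
    fun i hi k hk => lt_of_eq_true_of_eq_false (fun hik => (ih k hk.1 hik).1)
      (fun hki => (ih i hi.1 hki).2) hi.2 hk.2
  rw [← branchNode_eq] at hcut
  exact ⟨fun hi => hcut.1 i ⟨hij, hi⟩, fun hi => hcut.2 i ⟨hij, hi⟩⟩

theorem branchNode_congr {s t : ι → Bool} {j : ι} (hst : ∀ i < j, s i = t i) :
    branchNode (M := M) s j = branchNode t j := by
  induction j using WellFoundedLT.induction with
  | _ j ih =>
  have himage (b : Bool) : branchNode (M := M) s '' {i | i < j ∧ s i = b} =
      branchNode t '' {i | i < j ∧ t i = b} := by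
    rw [show {i | i < j ∧ s i = b} = {i | i < j ∧ t i = b} from
      Set.ext fun i => and_congr_right fun hi => by rw [hst i hi]]
    exact image_congr fun i hi => ih i hi.1 fun k hk => hst k (hk.trans hi.1)
  rw [branchNode_eq, branchNode_eq, himage, himage]

noncomputable def branchPoint (s : ι → Bool) : M :=
  cutPoint (branchNode s '' {i | s i = true}) (branchNode s '' {i | s i = false})

theorem branchPoint_spec (h : CutsFilled ι M) (s : ι → Bool) :
    (∀ i, s i = true → branchNode s i < branchPoint (M := M) s) ∧
      ∀ i, s i = false → branchPoint (M := M) s < branchNode s i :=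
  cutPoint_image_spec h fun _ hi _ hk => lt_of_eq_true_of_eq_false
    (fun hik => (branchNode_lt h s hik).1) (fun hki => (branchNode_lt h s hki).2) hi hk

theorem strictMono_branchPoint (h : CutsFilled ι M) :
    StrictMono fun s : Lex (ι → Bool) => branchPoint (M := M) (ofLex s) := by
  rintro s t ⟨i, hagree, hlt⟩
  obtain ⟨hs, ht⟩ := Bool.lt_iff.mp hlt
  calc branchPoint (ofLex s) < branchNode (ofLex s) i := (branchPoint_spec h _).2 i hs
    _ = branchNode (ofLex t) i := branchNode_congr hagree
    _ < branchPoint (ofLex t) := (branchPoint_spec h _).1 i ht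

end BranchTree

theorem two_power_le_mk_of_cutsFilled {ι M : Type u} [LinearOrder ι] [WellFoundedLT ι]
    [LinearOrder M] [Nonempty M] (h : CutsFilled ι M) : 2 ^ #ι ≤ #M := by
  calc 2 ^ #ι = #(ι → Bool) := by simp
    _ ≤ #M := mk_le_of_injective (strictMono_branchPoint h).injective

theorem stmt_11_general {M : Type u} [LinearOrder M] [Nonempty M] (κ : Cardinal.{u})
    (hsat : ∀ A B : Set M, Cardinal.mk ↥A < κ → Cardinal.mk ↥B < κ →
      (∀ a ∈ A, ∀ b ∈ B, a < b) →
      ∃ m : M, (∀ a ∈ A, a < m) ∧ (∀ b ∈ B, m < b)) :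
    ∀ θ : Cardinal.{u}, θ < κ → (2 : Cardinal.{u}) ^ θ ≤ Cardinal.mk M := by
  intro θ hθ
  have hcard : #θ.ord.ToType = θ := mk_ord_toType θ
  rw [← hcard] at hθ ⊢
  exact two_power_le_mk_of_cutsFilled (cutsFilled_of_saturated hθ hsat)

/-- An instance of the fact behind Shelah 950, Claim a10: a nonempty `κ`-saturated linear
order (`κ` infinite) has cardinality at least `2^θ` for every cardinal `θ < κ`. -/
theorem stmt_11 {M : Type u} [LinearOrder M] [Nonempty M] (κ : Cardinal.{u})
    (hκ : Cardinal.aleph0 ≤ κ)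
    (hsat : ∀ A B : Set M, Cardinal.mk ↥A < κ → Cardinal.mk ↥B < κ →
      (∀ a ∈ A, ∀ b ∈ B, a < b) →
      ∃ m : M, (∀ a ∈ A, a < m) ∧ (∀ b ∈ B, m < b)) :
    ∀ θ : Cardinal.{u}, θ < κ → (2 : Cardinal.{u}) ^ θ ≤ Cardinal.mk M :=
  stmt_11_general κ hsat
end

section
/- κ^{<κ} = κ; that is, κ is a regular cardinal and 2^θ ≤ κ for every θ < κ. -/
/-!
Fix `θ < κ`. Inside fewer than `κ` pairwise linked intervals, saturation builds a strictly
increasing `κ`-sequence, hence `|M| = κ` pairwise disjoint subintervals. Splitting in this way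
along a tree of height `θ`, every `s : θ → M` determines a branch of nested intervals, and
saturation gives a point `c s` inside all of them. Two branches separate at their first
disagreement into disjoint intervals, so `s ↦ c s` is injective and `κ ^ θ ≤ κ`. Hence
`2 ^ θ ≤ κ`, and `κ` is regular since otherwise König's theorem gives `κ < κ ^ cof κ`.
-/

universe u

open Cardinal Set Function

def OrderSaturated (κ : Cardinal.{u}) (M : Type u) [LinearOrder M] : Prop :=
  ∀ A B : Set M, #A < κ → #B < κ → (∀ a ∈ A, ∀ b ∈ B, a < b) →
    ∃ m : M, (∀ a ∈ A, a < m) ∧ ∀ b ∈ B, m < b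

def IsNestedIn {M : Type u} [LT M] (P : Set (M × M)) (p : M × M) : Prop :=
  p.1 < p.2 ∧ ∀ q ∈ P, q.1 < p.1 ∧ p.2 < q.2

namespace OrderSaturated

variable {M : Type u} [LinearOrder M] {κ : Cardinal.{u}}

theorem exists_strictMono (hsat : OrderSaturated κ M) (hκ : ℵ₀ ≤ κ) {ι : Type u}
    [LinearOrder ι] [WellFoundedLT ι] (hι : ∀ i : ι, #(Iio i) < κ) {L R : Set M}
    (hL : #L < κ) (hR : #R < κ) (hLR : ∀ a ∈ L, ∀ b ∈ R, a < b) :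
    ∃ f : ι → M, StrictMono f ∧ ∀ i, (∀ a ∈ L, a < f i) ∧ ∀ b ∈ R, f i < b := by
  obtain ⟨m₀, -⟩ := hsat L R hL hR hLR
  have : Nonempty M := ⟨m₀⟩
  let f : ι → M := wellFounded_lt.fix fun i f => Classical.epsilon fun m =>
    (∀ a ∈ L ∪ range (fun j : Iio i => f j j.2), a < m) ∧ ∀ b ∈ R, m < b
  have hf (i : ι) : f i = Classical.epsilon fun m =>
      (∀ a ∈ L ∪ f '' Iio i, a < m) ∧ ∀ b ∈ R, m < b := by
    rw [image_eq_range]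
    exact wellFounded_lt.fix_eq _ i
  have hf_gap (i : ι) : (∀ a ∈ L ∪ f '' Iio i, a < f i) ∧ ∀ b ∈ R, f i < b := by
    induction i using WellFoundedLT.induction with
    | _ i ih =>
      rw [hf]
      refine Classical.epsilon_spec (hsat _ R ?_ hR ?_)
      · exact (mk_union_le _ _).trans_lt (add_lt_of_lt hκ hL (mk_image_le.trans_lt (hι i)))
      · rintro a (ha | ⟨j, hj, rfl⟩) b hb
        exacts [hLR a ha b hb, (ih j hj).2 b hb]
  exact ⟨f, fun j i hji => (hf_gap i).1 _ (Or.inr ⟨j, hji, rfl⟩),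
    fun i => ⟨fun a ha => (hf_gap i).1 a (Or.inl ha), (hf_gap i).2⟩⟩

theorem exists_pairwise_disjoint_Ioo (hsat : OrderSaturated κ M) (hκ : ℵ₀ ≤ κ) (hM : #M ≤ κ)
    {P : Set (M × M)} (hP : #P < κ) (hPlinked : ∀ p ∈ P, ∀ q ∈ P, p.1 < q.2) :
    ∃ D : M → M × M, (∀ m, IsNestedIn P (D m)) ∧
      Pairwise (Disjoint on fun m => Ioo (D m).1 (D m).2) := by
  have := Cardinal.noMaxOrder hκ
  have hIio (i : κ.ord.ToType) : #(Iio i) < κ := by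
    simpa only [mk_ord_toType] using mk_Iio_lt i (by simp)
  obtain ⟨f, hf, hf_gap⟩ := hsat.exists_strictMono hκ hIio (mk_image_le.trans_lt hP)
    (mk_image_le.trans_lt hP) (by rintro _ ⟨p, hp, rfl⟩ _ ⟨q, hq, rfl⟩; exact hPlinked p hp q hq)
  obtain ⟨e⟩ : Nonempty (M ↪ κ.ord.ToType) := by rwa [← Cardinal.le_def, mk_ord_toType]
  refine ⟨fun m => (f (e m), f (Order.succ (e m))), fun m => ⟨hf (Order.lt_succ _),
    fun p hp => ⟨(hf_gap _).1 _ (mem_image_of_mem _ hp), (hf_gap _).2 _ (mem_image_of_mem _ hp)⟩⟩,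
    ?_⟩
  exact hf.monotone.pairwise_disjoint_on_Ioo_succ.comp_of_injective e.injective

end OrderSaturated

section Branch

variable {M ι : Type u} [LinearOrder ι] [WellFoundedLT ι] (step : Set (M × M) → M → M × M)

/-- The branch along `s` of the tree in which the children of a node with ancestors `P` are the
intervals `step P m`. -/
noncomputable def branch (s : ι → M) : ι → M × M :=
  wellFounded_lt.fix fun i b => step (range fun j : Iio i => b j j.2) (s i)

theorem branch_eq (s : ι → M) (i : ι) : branch step s i = step (branch step s '' Iio i) (s i) := by
  rw [image_eq_range]
  exact wellFounded_lt.fix_eq _ i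

theorem branch_congr {s s' : ι → M} {i : ι} (h : ∀ j ≤ i, s j = s' j) :
    branch step s i = branch step s' i := by
  induction i using WellFoundedLT.induction with
  | _ i ih =>
    rw [branch_eq, branch_eq, h i le_rfl]
    congr 1
    exact image_congr fun j hj => ih j hj fun k hk => h k (hk.trans (le_of_lt hj))

theorem exists_ne_and_branch_eq {s s' : ι → M} (h : s ≠ s') :
    ∃ i, s i ≠ s' i ∧ branch step s' i = step (branch step s '' Iio i) (s' i) := by
  obtain ⟨i, hi, hmin⟩ := wellFounded_lt.has_min {i | s i ≠ s' i} (Function.ne_iff.1 h)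
  refine ⟨i, hi, ?_⟩
  rw [branch_eq]
  congr 1
  exact image_congr fun j hj => (branch_congr step fun k hk =>
    not_not.1 fun h => hmin k h (hk.trans_lt hj)).symm

variable [LinearOrder M] {step}

theorem fst_branch_lt_snd_branch {s : ι → M} {j k : ι}
    (hj : IsNestedIn (branch step s '' Iio j) (branch step s j))
    (hk : IsNestedIn (branch step s '' Iio k) (branch step s k)) :
    (branch step s j).1 < (branch step s k).2 := by
  rcases lt_trichotomy j k with hjk | rfl | hkj
  · exact ((hk.2 _ ⟨j, hjk, rfl⟩).1).trans hk.1
  · exact hj.1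
  · exact hj.1.trans (hj.2 _ ⟨k, hkj, rfl⟩).2

theorem isNestedIn_branch {κ : Cardinal.{u}} (hι : #ι < κ)
    (hstep : ∀ P : Set (M × M), #P < κ → (∀ p ∈ P, ∀ q ∈ P, p.1 < q.2) →
      ∀ m, IsNestedIn P (step P m))
    (s : ι → M) (i : ι) : IsNestedIn (branch step s '' Iio i) (branch step s i) := by
  induction i using WellFoundedLT.induction with
  | _ i ih =>
    rw [branch_eq]
    refine hstep _ (mk_image_le.trans_lt ((mk_set_le _).trans_lt hι)) ?_ _
    rintro _ ⟨j, hj, rfl⟩ _ ⟨k, hk, rfl⟩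
    exact fst_branch_lt_snd_branch (ih j hj) (ih k hk)

end Branch

namespace OrderSaturated

variable {M : Type u} [LinearOrder M] {κ : Cardinal.{u}}

theorem nonempty (hsat : OrderSaturated κ M) (hκ : κ ≠ 0) : Nonempty M := by
  have h : #(∅ : Set M) < κ := by simpa [pos_iff_ne_zero] using hκ
  obtain ⟨m, -⟩ := hsat ∅ ∅ h h (by simp)
  exact ⟨m⟩

theorem exists_forall_mem_Ioo (hsat : OrderSaturated κ M) {ι : Type u} (hι : #ι < κ)
    (p : ι → M × M) (hp : ∀ j k, (p j).1 < (p k).2) : ∃ c, ∀ i, c ∈ Ioo (p i).1 (p i).2 := by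
  obtain ⟨c, hc₁, hc₂⟩ := hsat (range fun i => (p i).1) (range fun i => (p i).2)
    (mk_range_le.trans_lt hι) (mk_range_le.trans_lt hι)
    (by rintro _ ⟨j, rfl⟩ _ ⟨k, rfl⟩; exact hp j k)
  exact ⟨c, fun i => ⟨hc₁ _ ⟨i, rfl⟩, hc₂ _ ⟨i, rfl⟩⟩⟩

theorem mk_fun_le (hsat : OrderSaturated κ M) {ι : Type u} [LinearOrder ι] [WellFoundedLT ι]
    (hι : #ι < κ)
    (hsplit : ∀ P : Set (M × M), #P < κ → (∀ p ∈ P, ∀ q ∈ P, p.1 < q.2) →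
      ∃ D : M → M × M, (∀ m, IsNestedIn P (D m)) ∧
        Pairwise (Disjoint on fun m => Ioo (D m).1 (D m).2)) :
    #(ι → M) ≤ #M := by
  have := hsat.nonempty (zero_le.trans_lt hι).ne'
  choose! step hstep_nested hstep_disjoint using hsplit
  have hlinked (s : ι → M) (j k : ι) : (branch step s j).1 < (branch step s k).2 :=
    fst_branch_lt_snd_branch (isNestedIn_branch hι hstep_nested s j)
      (isNestedIn_branch hι hstep_nested s k)
  choose c hc using fun s => hsat.exists_forall_mem_Ioo hι (branch step s) (hlinked s)
  refine mk_le_of_injective (f := c) fun s s' hcs => by_contra fun hne => ?_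
  obtain ⟨i, hi, hs'_eq⟩ := exists_ne_and_branch_eq step hne
  have hs := hc s i
  have hs' := hc s' i
  rw [branch_eq] at hs
  rw [hs'_eq, ← hcs] at hs'
  have hP : #(branch step s '' Iio i) < κ := mk_image_le.trans_lt ((mk_set_le _).trans_lt hι)
  refine (hstep_disjoint _ hP ?_ hi).ne_of_mem hs hs' rfl
  rintro _ ⟨j, -, rfl⟩ _ ⟨k, -, rfl⟩
  exact hlinked s j k

theorem power_le (hsat : OrderSaturated κ M) (hκ : ℵ₀ ≤ κ) (hM : #M ≤ κ) {θ : Cardinal.{u}}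
    (hθ : θ < κ) : #M ^ θ ≤ #M := by
  rw [← mk_ord_toType θ, power_def]
  exact hsat.mk_fun_le (by rwa [mk_ord_toType]) fun P hP hPlinked =>
    hsat.exists_pairwise_disjoint_Ioo hκ hM hP hPlinked

end OrderSaturated

/-- Instance for dense linear orders of Shelah 950, Claim a10: if `κ > ℵ₀` and `(M, <)`
is a `κ`-saturated linear order of cardinality exactly `κ`, then `κ^{<κ} = κ`; that is,
`κ` is a regular cardinal and `2^θ ≤ κ` for every `θ < κ`. -/
theorem stmt_12 {M : Type u} [LinearOrder M] (κ : Cardinal.{u})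
    (hκ : Cardinal.aleph0 < κ)
    (hM : Cardinal.mk M = κ)
    (hsat : ∀ A B : Set M, Cardinal.mk ↥A < κ → Cardinal.mk ↥B < κ →
      (∀ a ∈ A, ∀ b ∈ B, a < b) →
      ∃ m : M, (∀ a ∈ A, a < m) ∧ (∀ b ∈ B, m < b)) :
    κ.IsRegular ∧ ∀ θ : Cardinal.{u}, θ < κ → (2 : Cardinal.{u}) ^ θ ≤ κ := by
  have hpow (θ : Cardinal.{u}) (hθ : θ < κ) : κ ^ θ ≤ κ := by
    simpa only [hM] using OrderSaturated.power_le hsat hκ.le hM.le hθ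
  refine ⟨⟨hκ.le, le_of_not_gt fun hcof => (hpow _ hcof).not_gt (lt_power_cof_ord hκ.le)⟩,
    fun θ hθ => ?_⟩
  exact (power_le_power_right (natCast_lt_aleph0.trans hκ).le).trans (hpow θ hθ)
end

section
/- The set of gaps (A, B) of I such that the cofinality of A is different from the coinitiality of B (the cofinality of B with the reversed order) has cardinality at most |I|. -/
universe u

/-- The cofinality of a subset of a linear order: the least cardinality of a cofinal
subset. -/
noncomputable def setCofinality {α : Type u} [LinearOrder α] (A : Set α) : Cardinal.{u} :=
  sInf {c : Cardinal.{u} |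
    ∃ S : Set α, S ⊆ A ∧ (∀ a ∈ A, ∃ s ∈ S, a ≤ s) ∧ Cardinal.mk ↥S = c}

/-- The coinitiality of a subset of a linear order: the least cardinality of a coinitial
subset (the cofinality with respect to the reversed order). -/
noncomputable def setCoinitiality {α : Type u} [LinearOrder α] (B : Set α) : Cardinal.{u} :=
  sInf {c : Cardinal.{u} |
    ∃ S : Set α, S ⊆ B ∧ (∀ b ∈ B, ∃ s ∈ S, s ≤ b) ∧ Cardinal.mk ↥S = c}

/-- `(A, B)` is a gap (Dedekind cut) of the linear order. -/
def IsGapPair {α : Type u} [LinearOrder α] (A B : Set α) : Prop :=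
  A ∪ B = Set.univ ∧ (∀ a ∈ A, ∀ b ∈ B, a < b) ∧ A.Nonempty ∧ B.Nonempty ∧
    (∀ a ∈ A, ∃ a' ∈ A, a < a') ∧ (∀ b ∈ B, ∃ b' ∈ B, b' < b)

/-!
For a downward closed `A`, pick by transfinite recursion a point strictly between all earlier
points lying in `A` and all earlier points lying outside `A`, for as long as one exists. The
points in `A` are then cofinal in `A` and the others coinitial in `Aᶜ`. If both kinds occur
cofinally often along the sequence they interleave, which forces `cf A = coi Aᶜ`. Otherwise
the sequence stays on one side of the cut from some stage `i` on, and the point of stage `i`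
with its side determines `A`: each choice depends only on the earlier points and their sides,
and once the sequences of two cuts part ways at a common point, they stay on opposite sides of
it. So the cuts with `cf A ≠ coi Aᶜ` inject into `I ⊕ I`.
-/

open Set Cardinal OrderDual

section Cofinality

variable {α : Type u} [LinearOrder α]

theorem exists_cofinal_mk_eq_setCofinality (A : Set α) :
    ∃ S ⊆ A, (∀ a ∈ A, ∃ s ∈ S, a ≤ s) ∧ #S = setCofinality A :=
  csInf_mem (s := {c | ∃ S ⊆ A, (∀ a ∈ A, ∃ s ∈ S, a ≤ s) ∧ #S = c})
    ⟨_, A, subset_rfl, fun a ha => ⟨a, ha, le_rfl⟩, rfl⟩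

theorem setCoinitiality_le {B S : Set α} (hSB : S ⊆ B) (hS : ∀ b ∈ B, ∃ s ∈ S, s ≤ b) :
    setCoinitiality B ≤ #S :=
  csInf_le (OrderBot.bddBelow _) ⟨S, hSB, hS, rfl⟩

theorem setCoinitiality_preimage_ofDual (A : Set α) :
    setCoinitiality (ofDual ⁻¹' A) = setCofinality A :=
  rfl

end Cofinality

section Interleaving

variable {α : Type u} [LinearOrder α] {ι : Type*} [LinearOrder ι] {A : Set α} {f : ι → α}

def PinchesCut (A : Set α) (f : ι → α) : Prop :=
  ∀ ⦃j i⦄, j < i → (f j ∈ A → f j < f i) ∧ (f j ∉ A → f i < f j)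

namespace PinchesCut

theorem le_of_notMem (hf : PinchesCut A f) {j i : ι} (hji : j ≤ i) (hj : f j ∉ A) :
    f i ≤ f j := by
  rcases hji.lt_or_eq with hji | rfl
  exacts [((hf hji).2 hj).le, le_rfl]

theorem injective (hf : PinchesCut A f) : Function.Injective f := by
  refine Function.Injective.of_lt_imp_ne fun j i hji => ?_
  by_cases hj : f j ∈ A
  exacts [((hf hji).1 hj).ne, ((hf hji).2 hj).ne']

theorem dual (hf : PinchesCut A f) : PinchesCut (ofDual ⁻¹' Aᶜ) (toDual ∘ f) :=
  fun _ _ hji => ⟨(hf hji).2, fun hj => (hf hji).1 (not_not.1 hj)⟩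

/-- Above each point of a cofinal subset of `A` pick a term in `A`, then a later term outside
`A`: these are coinitial in `Aᶜ`. -/
theorem setCoinitiality_compl_le (hf : PinchesCut A f)
    (hcof : ∀ x ∈ A, ∃ j, f j ∈ A ∧ x ≤ f j) (hcoi : ∀ x ∉ A, ∃ j, f j ∉ A ∧ f j ≤ x)
    (hin : ∀ i, ∃ j, i ≤ j ∧ f j ∈ A) (hout : ∀ i, ∃ j, i ≤ j ∧ f j ∉ A) :
    setCoinitiality Aᶜ ≤ setCofinality A := by
  obtain ⟨S, hSA, hS, hSmk⟩ := exists_cofinal_mk_eq_setCofinality A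
  choose above habove_mem hle_above using fun a : S => hcof a (hSA a.2)
  choose next hle_next hnext using fun a : S => hout (above a)
  have hcoinitial : ∀ y ∈ Aᶜ, ∃ s ∈ range (f ∘ next), s ≤ y := by
    intro y hy
    obtain ⟨j, hj, hjy⟩ := hcoi y hy
    obtain ⟨k, hjk, hk⟩ := hin j
    obtain ⟨a, haS, hka⟩ := hS (f k) hk
    have hj_above : j ≤ above ⟨a, haS⟩ := by
      by_contra! hlt
      exact (((hf (hlt.trans_le hjk)).1 (habove_mem _)).trans_le hka).not_ge
        (hle_above ⟨a, haS⟩)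
    exact ⟨f (next ⟨a, haS⟩), mem_range_self (f := f ∘ next) ⟨a, haS⟩,
      (hf.le_of_notMem (hj_above.trans (hle_next _)) hj).trans hjy⟩
  calc setCoinitiality Aᶜ ≤ #(range (f ∘ next)) :=
        setCoinitiality_le (range_subset_iff.2 hnext) hcoinitial
    _ ≤ #S := mk_range_le
    _ = setCofinality A := hSmk

theorem setCofinality_eq_setCoinitiality_compl (hf : PinchesCut A f)
    (hcof : ∀ x ∈ A, ∃ j, f j ∈ A ∧ x ≤ f j) (hcoi : ∀ x ∉ A, ∃ j, f j ∉ A ∧ f j ≤ x)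
    (hin : ∀ i, ∃ j, i ≤ j ∧ f j ∈ A) (hout : ∀ i, ∃ j, i ≤ j ∧ f j ∉ A) :
    setCofinality A = setCoinitiality Aᶜ := by
  refine le_antisymm ?_ (hf.setCoinitiality_compl_le hcof hcoi hin hout)
  have h := hf.dual.setCoinitiality_compl_le hcoi
    (fun x hx => (hcof x (not_not.1 hx)).imp fun _ hj => ⟨not_not.2 hj.1, hj.2⟩) hout
    (fun i => (hin i).imp fun _ hj => ⟨hj.1, not_not.2 hj.2⟩)
  rwa [preimage_compl, compl_compl, setCoinitiality_preimage_ofDual] at h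

end PinchesCut

end Interleaving

theorem exists_forall_ge_iff_or_unbounded {ι : Type*} [Preorder ι] (P : ι → Prop) :
    (∃ i, ∀ j, i ≤ j → (P j ↔ P i)) ∨
      ((∀ i, ∃ j, i ≤ j ∧ P j) ∧ ∀ i, ∃ j, i ≤ j ∧ ¬P j) := by
  refine or_iff_not_imp_left.2 fun h => ?_
  push Not at h
  constructor <;> intro i <;> obtain ⟨j, hij, hj⟩ := h i <;> by_cases hi : P i
  exacts [⟨i, le_rfl, hi⟩, ⟨j, hij, by tauto⟩, ⟨j, hij, by tauto⟩, ⟨i, le_rfl, hi⟩]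

section CanonicalSequence

variable {α : Type u} [LinearOrder α] [Nonempty α] (A : Set α)

def pinchRegion (f : Ordinal.{u} → α) (o : Ordinal.{u}) : Set α :=
  {x | ∀ j < o, (f j ∈ A → f j < x) ∧ (f j ∉ A → x < f j)}

/-- From stage `pinchLength A` on, the values are junk (`epsilon` of an empty predicate). -/
noncomputable def pinchSeq : Ordinal.{u} → α :=
  Ordinal.lt_wf.fix fun o seq => Classical.epsilon fun x =>
    ∀ j (hj : j < o), (seq j hj ∈ A → seq j hj < x) ∧ (seq j hj ∉ A → x < seq j hj)

theorem pinchSeq_eq (o : Ordinal.{u}) :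
    pinchSeq A o = Classical.epsilon (· ∈ pinchRegion A (pinchSeq A) o) :=
  Ordinal.lt_wf.fix_eq _ o

theorem exists_pinchRegion_eq_empty : ∃ o, pinchRegion A (pinchSeq A) o = ∅ := by
  by_contra! h
  have hf : PinchesCut A (pinchSeq A) := fun j i hji => by
    rw [pinchSeq_eq A i]
    exact Classical.epsilon_spec (h i) j hji
  exact not_small_ordinal.{u} (small_of_injective hf.injective)

noncomputable def pinchLength : Ordinal.{u} :=
  sInf {o | pinchRegion A (pinchSeq A) o = ∅}

theorem pinchRegion_pinchLength : pinchRegion A (pinchSeq A) (pinchLength A) = ∅ :=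
  csInf_mem (exists_pinchRegion_eq_empty A)

theorem pinchSeq_mem_pinchRegion {o : Ordinal.{u}} (ho : o < pinchLength A) :
    pinchSeq A o ∈ pinchRegion A (pinchSeq A) o := by
  have hne : o ∉ {o | pinchRegion A (pinchSeq A) o = ∅} :=
    notMem_of_lt_csInf ho (OrderBot.bddBelow _)
  rw [pinchSeq_eq]
  exact Classical.epsilon_spec (nonempty_iff_ne_empty.2 hne)

theorem pinchesCut_pinchSeq : PinchesCut A fun i : Iio (pinchLength A) => pinchSeq A i :=
  fun j i hji => pinchSeq_mem_pinchRegion A i.2 j hji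

theorem exists_pinchSeq_between (x : α) : ∃ j < pinchLength A,
    (pinchSeq A j ∈ A ∧ x ≤ pinchSeq A j) ∨ (pinchSeq A j ∉ A ∧ pinchSeq A j ≤ x) := by
  have hx : x ∉ pinchRegion A (pinchSeq A) (pinchLength A) := by
    rw [pinchRegion_pinchLength]
    exact notMem_empty x
  simp only [pinchRegion, mem_ofPred_eq, not_forall] at hx
  obtain ⟨j, hj, hx⟩ := hx
  refine ⟨j, hj, ?_⟩
  by_cases hjA : pinchSeq A j ∈ A <;> simp_all

variable {A}

theorem exists_pinchSeq_mem_le (hA : IsLowerSet A) {x : α} (hx : x ∈ A) :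
    ∃ j < pinchLength A, pinchSeq A j ∈ A ∧ x ≤ pinchSeq A j := by
  obtain ⟨j, hj, h | h⟩ := exists_pinchSeq_between A x
  exacts [⟨j, hj, h⟩, (h.1 (hA h.2 hx)).elim]

theorem exists_pinchSeq_notMem_le (hA : IsLowerSet A) {x : α} (hx : x ∉ A) :
    ∃ j < pinchLength A, pinchSeq A j ∉ A ∧ pinchSeq A j ≤ x := by
  obtain ⟨j, hj, h | h⟩ := exists_pinchSeq_between A x
  exacts [(hx (hA h.2 h.1)).elim, ⟨j, hj, h⟩]

variable (A) in
def SettlesAt (i : Ordinal.{u}) : Prop :=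
  i < pinchLength A ∧ ∀ j, i ≤ j → j < pinchLength A → (pinchSeq A j ∈ A ↔ pinchSeq A i ∈ A)

theorem exists_settlesAt (hA : IsLowerSet A) (h : setCofinality A ≠ setCoinitiality Aᶜ) :
    ∃ i, SettlesAt A i := by
  rcases exists_forall_ge_iff_or_unbounded fun i : Iio (pinchLength A) => pinchSeq A i ∈ A
    with ⟨i, hi⟩ | ⟨hin, hout⟩
  · exact ⟨i, i.2, fun j hij hj => hi ⟨j, hj⟩ hij⟩
  refine absurd ((pinchesCut_pinchSeq A).setCofinality_eq_setCoinitiality_compl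
    (fun x hx => ?_) (fun x hx => ?_) hin hout) h
  · obtain ⟨j, hj, hjx⟩ := exists_pinchSeq_mem_le hA hx
    exact ⟨⟨j, hj⟩, hjx⟩
  · obtain ⟨j, hj, hjx⟩ := exists_pinchSeq_notMem_le hA hx
    exact ⟨⟨j, hj⟩, hjx⟩

variable (A) in
open Classical in
noncomputable def pinchKey (i : Ordinal.{u}) : α ⊕ α :=
  if pinchSeq A i ∈ A then .inl (pinchSeq A i) else .inr (pinchSeq A i)

variable {A' : Set α} {i i' : Ordinal.{u}}

theorem pinchKey_eq_iff : pinchKey A i = pinchKey A' i' ↔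
    pinchSeq A i = pinchSeq A' i' ∧ (pinchSeq A i ∈ A ↔ pinchSeq A' i' ∈ A') := by
  unfold pinchKey
  split_ifs <;> simp_all

theorem pinchSeq_congr (h : ∀ j < i, pinchKey A j = pinchKey A' j) :
    pinchSeq A i = pinchSeq A' i := by
  rw [pinchSeq_eq, pinchSeq_eq]
  refine congrArg Classical.epsilon (funext fun x => propext ?_)
  refine forall₂_congr fun j hj => ?_
  obtain ⟨hseq, hmem⟩ := pinchKey_eq_iff.1 (h j hj)
  rw [hmem, hseq]

/-- The sides chosen along the two sequences cannot split before the stages carrying equal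
keys: past a split, one sequence stays strictly below the splitting point and the other
strictly above it. -/
theorem mem_of_pinchKey_eq (hi : i < pinchLength A) (hi' : i' < pinchLength A')
    (hkey : pinchKey A i = pinchKey A' i') {j : Ordinal.{u}} (hji : j ≤ i) (hji' : j ≤ i')
    (hj : pinchSeq A j = pinchSeq A' j) (hmem : pinchSeq A j ∈ A) : pinchSeq A' j ∈ A' := by
  by_contra hmem'
  obtain ⟨hp, hside⟩ := pinchKey_eq_iff.1 hkey
  rcases hji.lt_or_eq with hji | rfl <;> rcases hji'.lt_or_eq with hji' | rfl
  · have h₁ := (pinchSeq_mem_pinchRegion A hi j hji).1 hmem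
    have h₂ := (pinchSeq_mem_pinchRegion A' hi' j hji').2 hmem'
    order
  · have h₁ := (pinchSeq_mem_pinchRegion A hi j hji).1 hmem
    order
  · have h₂ := (pinchSeq_mem_pinchRegion A' hi' j hji').2 hmem'
    order
  · exact hmem' (hside.1 hmem)

theorem pinchKey_agree_of_pinchKey_eq (hi : i < pinchLength A) (hi' : i' < pinchLength A')
    (hkey : pinchKey A i = pinchKey A' i') :
    i = i' ∧ ∀ j ≤ i, pinchKey A j = pinchKey A' j := by
  have hagree : ∀ j, j ≤ i → j ≤ i' → pinchKey A j = pinchKey A' j := by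
    intro j
    induction j using WellFoundedLT.induction with | _ j ih => ?_
    intro hji hji'
    have hj : pinchSeq A j = pinchSeq A' j :=
      pinchSeq_congr fun k hk => ih k hk (hk.le.trans hji) (hk.le.trans hji')
    exact pinchKey_eq_iff.2 ⟨hj, mem_of_pinchKey_eq hi hi' hkey hji hji' hj,
      mem_of_pinchKey_eq hi' hi hkey.symm hji' hji hj.symm⟩
  have hii' : i = i' := by
    obtain ⟨hp, -⟩ := pinchKey_eq_iff.1 hkey
    rcases le_total i i' with h | h
    · obtain ⟨hpi, -⟩ := pinchKey_eq_iff.1 (hagree i le_rfl h)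
      exact congrArg Subtype.val ((pinchesCut_pinchSeq A').injective
        (a₁ := ⟨i, h.trans_lt hi'⟩) (a₂ := ⟨i', hi'⟩) (hpi.symm.trans hp))
    · obtain ⟨hpi, -⟩ := pinchKey_eq_iff.1 (hagree i' h le_rfl)
      exact congrArg Subtype.val ((pinchesCut_pinchSeq A).injective
        (a₁ := ⟨i, hi⟩) (a₂ := ⟨i', h.trans_lt hi⟩) (hp.trans hpi.symm))
  exact ⟨hii', fun j hj => hagree j hj (hii' ▸ hj)⟩

theorem subset_of_settlesAt (hA : IsLowerSet A) (hA' : IsLowerSet A') (hs : SettlesAt A i)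
    (hs' : SettlesAt A' i) (hagree : ∀ j ≤ i, pinchKey A j = pinchKey A' j) : A ⊆ A' := by
  intro x hx
  by_contra hx'
  obtain ⟨-, hside⟩ := pinchKey_eq_iff.1 (hagree i le_rfl)
  by_cases hin : pinchSeq A i ∈ A
  · obtain ⟨j, hj, hjA', hjx⟩ := exists_pinchSeq_notMem_le hA' hx'
    have hji : j < i := lt_of_not_ge fun hij => hjA' ((hs'.2 j hij hj).2 (hside.1 hin))
    obtain ⟨hpj, hsj⟩ := pinchKey_eq_iff.1 (hagree j hji.le)
    exact hjA' (hsj.1 (hA (hpj ▸ hjx) hx))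
  · obtain ⟨j, hj, hjA, hxj⟩ := exists_pinchSeq_mem_le hA hx
    have hji : j < i := lt_of_not_ge fun hij => hin ((hs.2 j hij hj).1 hjA)
    obtain ⟨hpj, hsj⟩ := pinchKey_eq_iff.1 (hagree j hji.le)
    exact hx' (hA' (hpj ▸ hxj) (hsj.1 hjA))

theorem eq_of_pinchKey_eq (hA : IsLowerSet A) (hA' : IsLowerSet A') (hs : SettlesAt A i)
    (hs' : SettlesAt A' i') (hkey : pinchKey A i = pinchKey A' i') : A = A' := by
  obtain ⟨rfl, hagree⟩ := pinchKey_agree_of_pinchKey_eq hs.1 hs'.1 hkey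
  exact (subset_of_settlesAt hA hA' hs hs' hagree).antisymm
    (subset_of_settlesAt hA' hA hs' hs fun j hj => (hagree j hj).symm)

end CanonicalSequence

theorem IsGapPair.snd_eq_compl {α : Type u} [LinearOrder α] {A B : Set α} (h : IsGapPair A B) :
    B = Aᶜ := by
  ext x
  refine ⟨fun hxB hxA => (h.2.1 x hxA x hxB).false, fun hxA => ?_⟩
  exact (eq_univ_iff_forall.1 h.1 x).resolve_left hxA

theorem IsGapPair.isLowerSet {α : Type u} [LinearOrder α] {A B : Set α} (h : IsGapPair A B) :
    IsLowerSet A := by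
  intro a x hxa ha
  by_contra hx
  exact (h.2.1 a ha x (h.snd_eq_compl ▸ hx)).not_ge hxa

/-- Classical theorem cited in Shelah 950 (Question a29, proof of Claim a20): an infinite
linear order `I` has at most `|I|` gaps `(A, B)` whose two cofinalities differ, i.e. with
the cofinality of `A` different from the coinitiality of `B`. -/
theorem stmt_13 {I : Type u} [LinearOrder I] [Infinite I] :
    Cardinal.mk ↥{p : Set I × Set I |
        IsGapPair p.1 p.2 ∧ setCofinality p.1 ≠ setCoinitiality p.2} ≤
      Cardinal.mk I := by
  set W := {p : Set I × Set I | IsGapPair p.1 p.2 ∧ setCofinality p.1 ≠ setCoinitiality p.2}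
  have hsettles (p : W) : ∃ i, SettlesAt p.1.1 i := by
    obtain ⟨hgap, hcf⟩ := p.2
    exact exists_settlesAt hgap.isLowerSet (hgap.snd_eq_compl ▸ hcf)
  choose i hi using hsettles
  have hinj : Function.Injective fun p : W => pinchKey p.1.1 (i p) := by
    intro p q hpq
    have hfst := eq_of_pinchKey_eq p.2.1.isLowerSet q.2.1.isLowerSet (hi p) (hi q) hpq
    exact Subtype.ext (Prod.ext hfst (by rw [p.2.1.snd_eq_compl, q.2.1.snd_eq_compl, hfst]))
  calc #W ≤ #(I ⊕ I) := mk_le_of_injective hinj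
    _ = #I := by rw [mk_sum, lift_id, add_eq_self (aleph0_le_mk I)]
end

section
/- For every regular cardinal θ ≤ λ, there exists a gap (A, B) of M — i.e. A ∪ B = M, A elementwise below B, both nonempty, A without greatest element, B without least element — such that the cofinality of A equals θ. -/
universe u

open Ordinal Set Cardinal

section Gap

attribute [local instance] Classical.propDecidable

variable {M : Type u} [LinearOrder M] (r : M → M → Prop) [IsWellOrder M r] (θo : Ordinal.{u})

/-- The already-built lower (x) elements below stage `b`, restricted to indices of
`typein` below `θo`. -/
def gapX (g : M → M × M) (b : M) : Set M :=
  (fun c => (g c).1) '' {c | r c b ∧ Ordinal.typein r c < θo}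

/-- The already-built upper (y) elements below stage `b`. -/
def gapY (g : M → M × M) (b : M) : Set M :=
  (fun c => (g c).2) '' {c | r c b}

/-- Required property of the new upper element at stage `b`. -/
def gapQy (g : M → M × M) (b y : M) : Prop :=
  (∀ x ∈ gapX r θo g b, x < y) ∧ (∀ m ∈ gapY r g b, y < m) ∧
    (((∀ x ∈ gapX r θo g b, x < b) ∧ (∀ m ∈ gapY r g b, b < m)) → y < b)

noncomputable def gapStepY (g : M → M × M) (b : M) : M :=
  if h : ∃ y : M, gapQy r θo g b y then h.choose else b

/-- Required property of the new lower element at stage `b`. -/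
def gapPx (g : M → M × M) (b x : M) : Prop :=
  (∀ x' ∈ gapX r θo g b, x' < x) ∧ x < gapStepY r θo g b ∧ (∀ m ∈ gapY r g b, x < m)

noncomputable def gapStepX (g : M → M × M) (b : M) : M :=
  if h : ∃ x : M, gapPx r θo g b x then h.choose else b

noncomputable def gapStep (g : M → M × M) (b : M) : M × M :=
  (gapStepX r θo g b, gapStepY r θo g b)

theorem gapStepY_spec {g : M → M × M} {b : M} (h : ∃ y : M, gapQy r θo g b y) :
    gapQy r θo g b (gapStepY r θo g b) := by
  rw [gapStepY, dif_pos h]; exact h.choose_spec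

theorem gapStepX_spec {g : M → M × M} {b : M} (h : ∃ x : M, gapPx r θo g b x) :
    gapPx r θo g b (gapStepX r θo g b) := by
  rw [gapStepX, dif_pos h]; exact h.choose_spec

theorem gapStep_congr {g g' : M → M × M} {b : M} (h : ∀ c, r c b → g c = g' c) :
    gapStep r θo g b = gapStep r θo g' b := by
  have hX : gapX r θo g b = gapX r θo g' b := by
    unfold gapX; apply Set.image_congr; rintro c ⟨hc, -⟩; rw [h c hc]
  have hY : gapY r g b = gapY r g' b := by
    unfold gapY; apply Set.image_congr; intro c hc; rw [h c hc]
  have hQ : gapQy r θo g b = gapQy r θo g' b := by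
    unfold gapQy; rw [hX, hY]
  have hYs : gapStepY r θo g b = gapStepY r θo g' b := by
    unfold gapStepY; rw [hQ]
  have hP : gapPx r θo g b = gapPx r θo g' b := by
    unfold gapPx; rw [hX, hY, hYs]
  have hXs : gapStepX r θo g b = gapStepX r θo g' b := by
    unfold gapStepX; rw [hP]
  rw [gapStep, gapStep, hXs, hYs]

noncomputable def gapSeq : M → M × M :=
  (IsWellFounded.wf (r := r)).fix fun b rec =>
    gapStep r θo (fun c => if h : r c b then rec c h else (c, c)) b

theorem gapSeq_eq (b : M) : gapSeq r θo b = gapStep r θo (gapSeq r θo) b := by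
  unfold gapSeq
  rw [WellFounded.fix_eq]
  exact gapStep_congr r θo fun c hc => by rw [dif_pos hc]

/-- The inductive invariant of the construction. -/
abbrev gapInv (b : M) : Prop :=
  (∀ c, r c b → Ordinal.typein r c < θo →
    (gapSeq r θo c).1 < (gapSeq r θo b).1) ∧
  (∀ c, r c b → (gapSeq r θo b).1 < (gapSeq r θo c).2) ∧
  (gapSeq r θo b).1 < (gapSeq r θo b).2 ∧
  (∀ c, r c b → (gapSeq r θo b).2 < (gapSeq r θo c).2) ∧
  (((∀ c, r c b → Ordinal.typein r c < θo → (gapSeq r θo c).1 < b) ∧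
    (∀ c, r c b → b < (gapSeq r θo c).2)) → (gapSeq r θo b).2 < b)

theorem gapSeq_inv (lam : Cardinal.{u}) (hlam : lam.IsRegular)
    (htype : Ordinal.type r = lam.ord)
    (hsat : ∀ A B : Set M, Cardinal.mk ↥A < lam → Cardinal.mk ↥B < lam →
      (∀ a ∈ A, ∀ b ∈ B, a < b) →
      ∃ m : M, (∀ a ∈ A, a < m) ∧ (∀ b ∈ B, m < b)) :
    ∀ b : M, gapInv r θo b := by
  refine fun b => (IsWellFounded.wf (r := r)).induction (C := gapInv r θo) b fun b IH => ?_
  set g := gapSeq r θo with hg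
  -- cross property among earlier stages
  have cross : ∀ c d, r c b → r d b → Ordinal.typein r c < θo → (g c).1 < (g d).2 := by
    intro c d hc hd hcθ
    rcases trichotomous_of r c d with h | rfl | h
    · exact lt_trans ((IH d hd).1 c h hcθ) (IH d hd).2.2.1
    · exact (IH c hc).2.2.1
    · exact (IH c hc).2.1 d h
  have hseg : (Cardinal.mk ↥{c : M | r c b}) < lam := by
    have : Cardinal.mk ↥{c : M | r c b} = (Ordinal.typein r b).card := Ordinal.card_typein b
    rw [this, ← Cardinal.lt_ord, ← htype]
    exact Ordinal.typein_lt_type r b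
  have hXlt : Cardinal.mk ↥(gapX r θo g b) < lam :=
    (Cardinal.mk_image_le.trans
      (Cardinal.mk_le_mk_of_subset fun c hc => hc.1)).trans_lt hseg
  have hYlt : Cardinal.mk ↥(gapY r g b) < lam := Cardinal.mk_image_le.trans_lt hseg
  have hXY : ∀ a ∈ gapX r θo g b, ∀ m ∈ gapY r g b, a < m := by
    rintro a ⟨c, ⟨hc, hcθ⟩, rfl⟩ m ⟨d, hd, rfl⟩
    exact cross c d hc hd hcθ
  -- existence of the new upper element
  have hy : ∃ y : M, gapQy r θo g b y := by
    by_cases hb : (∀ x ∈ gapX r θo g b, x < b) ∧ (∀ m ∈ gapY r g b, b < m)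
    · have hBlt : Cardinal.mk ↥(insert b (gapY r g b) : Set M) < lam :=
        Cardinal.mk_insert_le.trans_lt
          (Cardinal.add_lt_of_lt hlam.aleph0_le hYlt
            (Cardinal.one_lt_aleph0.trans_le hlam.aleph0_le))
      have hcr : ∀ a ∈ gapX r θo g b, ∀ z ∈ (insert b (gapY r g b) : Set M), a < z := by
        intro a ha z hz
        rcases hz with rfl | hz
        · exact hb.1 a ha
        · exact hXY a ha z hz
      obtain ⟨m, hm1, hm2⟩ := hsat (gapX r θo g b) (insert b (gapY r g b)) hXlt hBlt hcr
      exact ⟨m, hm1, fun z hz => hm2 z (Set.mem_insert_of_mem _ hz),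
        fun _ => hm2 b (Set.mem_insert _ _)⟩
    · obtain ⟨m, hm1, hm2⟩ := hsat (gapX r θo g b) (gapY r g b) hXlt hYlt hXY
      exact ⟨m, hm1, hm2, fun h => absurd h hb⟩
  have hQy : gapQy r θo g b (gapStepY r θo g b) := gapStepY_spec r θo hy
  -- existence of the new lower element
  have hx : ∃ x : M, gapPx r θo g b x := by
    have hBlt : Cardinal.mk ↥(insert (gapStepY r θo g b) (gapY r g b) : Set M) < lam :=
      Cardinal.mk_insert_le.trans_lt
        (Cardinal.add_lt_of_lt hlam.aleph0_le hYlt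
          (Cardinal.one_lt_aleph0.trans_le hlam.aleph0_le))
    have hcr : ∀ a ∈ gapX r θo g b,
        ∀ z ∈ (insert (gapStepY r θo g b) (gapY r g b) : Set M), a < z := by
      intro a ha z hz
      rcases hz with rfl | hz
      · exact hQy.1 a ha
      · exact hXY a ha z hz
    obtain ⟨m, hm1, hm2⟩ := hsat (gapX r θo g b)
      (insert (gapStepY r θo g b) (gapY r g b)) hXlt hBlt hcr
    exact ⟨m, hm1, hm2 _ (Set.mem_insert _ _),
      fun z hz => hm2 z (Set.mem_insert_of_mem _ hz)⟩
  have hPx : gapPx r θo g b (gapStepX r θo g b) := gapStepX_spec r θo hx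
  have hgb : g b = (gapStepX r θo g b, gapStepY r θo g b) := gapSeq_eq r θo b
  have hgb1 : (g b).1 = gapStepX r θo g b := by rw [hgb]
  have hgb2 : (g b).2 = gapStepY r θo g b := by rw [hgb]
  refine ⟨?_, ?_, ?_, ?_, ?_⟩
  · intro c hc hcθ
    rw [hgb1]
    exact hPx.1 _ ⟨c, ⟨hc, hcθ⟩, rfl⟩
  · intro c hc
    rw [hgb1]
    exact hPx.2.2 _ ⟨c, hc, rfl⟩
  · rw [hgb1, hgb2]; exact hPx.2.1
  · intro c hc
    rw [hgb2]
    exact hQy.2.1 _ ⟨c, hc, rfl⟩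
  · intro H
    rw [hgb2]
    refine hQy.2.2 ⟨?_, ?_⟩
    · rintro x ⟨c, ⟨hc, hcθ⟩, rfl⟩; exact H.1 c hc hcθ
    · rintro m ⟨c, hc, rfl⟩; exact H.2 c hc

end Gap

/-- Behind the lower bound `f^aut_{Th(ℚ,<)}(ℵ_ζ) ≥ |ζ|` of Shelah 950, Observation a7(4):
if `λ` is an infinite regular cardinal and `(M, <)` is a `λ`-saturated linear order of
cardinality `λ`, then for every regular `θ ≤ λ` there is a gap `(A, B)` of `M` whose
lower part has cofinality exactly `θ`. -/
theorem stmt_16 {M : Type u} [LinearOrder M] (lam : Cardinal.{u})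
    (hlam : lam.IsRegular) (hM : Cardinal.mk M = lam)
    (hsat : ∀ A B : Set M, Cardinal.mk ↥A < lam → Cardinal.mk ↥B < lam →
      (∀ a ∈ A, ∀ b ∈ B, a < b) →
      ∃ m : M, (∀ a ∈ A, a < m) ∧ (∀ b ∈ B, m < b)) :
    ∀ θ : Cardinal.{u}, θ.IsRegular → θ ≤ lam →
      ∃ A B : Set M,
        (A ∪ B = Set.univ ∧ (∀ a ∈ A, ∀ b ∈ B, a < b) ∧
          A.Nonempty ∧ B.Nonempty ∧
          (∀ a ∈ A, ∃ a' ∈ A, a < a') ∧ (∀ b ∈ B, ∃ b' ∈ B, b' < b)) ∧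
        setCofinality A = θ := by
  intro θ hθreg hθle
  obtain ⟨r, wo, hr⟩ := Cardinal.ord_eq M
  have htype : Ordinal.type r = lam.ord := by rw [← hr, hM]
  set θo : Ordinal.{u} := θ.ord with hθo_def
  have hθo : θo ≤ Ordinal.type r := by
    rw [htype]; exact Cardinal.ord_le_ord.2 hθle
  have hθlim : Order.IsSuccLimit θo := Cardinal.isSuccLimit_ord hθreg.aleph0_le
  have hlamlim : Order.IsSuccLimit (Ordinal.type r) := by
    rw [htype]; exact Cardinal.isSuccLimit_ord hlam.aleph0_le
  set g := gapSeq r θo with hg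
  have inv := gapSeq_inv r θo lam hlam htype hsat
  have xmono : ∀ c d, Ordinal.typein r c < θo → r c d → (g c).1 < (g d).1 :=
    fun c d h1 h2 => (inv d).1 c h2 h1
  have xy : ∀ c d, Ordinal.typein r c < θo → (g c).1 < (g d).2 := by
    intro c d hc
    rcases trichotomous_of r c d with h | rfl | h
    · exact lt_trans (xmono c d hc h) (inv d).2.2.1
    · exact (inv c).2.2.1
    · exact (inv c).2.1 d h
  have ymono : ∀ c d, r c d → (g d).2 < (g c).2 := fun c d h => (inv d).2.2.2.1 c h
  set A : Set M := {m | ∃ c, Ordinal.typein r c < θo ∧ m ≤ (g c).1} with hA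
  set B : Set M := Aᶜ with hB
  have hBgt : ∀ m ∈ B, ∀ c, Ordinal.typein r c < θo → (g c).1 < m := by
    intro m hm c hc
    by_contra h
    exact hm ⟨c, hc, le_of_not_gt h⟩
  have yB : ∀ c, (g c).2 ∈ B := by
    intro c hmem
    obtain ⟨d, hd, hle⟩ := hmem
    exact absurd (xy d c hd) (not_lt_of_ge hle)
  -- successor index inside the θ-segment
  have succIdx : ∀ c : M, Ordinal.typein r c < θo →
      ∃ c' : M, r c c' ∧ Ordinal.typein r c' < θo := by
    intro c hc
    have h1 : Order.succ (Ordinal.typein r c) < θo := hθlim.succ_lt hc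
    refine ⟨Ordinal.enum r ⟨Order.succ (Ordinal.typein r c), lt_of_lt_of_le h1 hθo⟩, ?_, ?_⟩
    · rw [← Ordinal.typein_lt_typein r, Ordinal.typein_enum]
      exact Order.lt_succ _
    · rw [Ordinal.typein_enum]; exact h1
  have h0 : (0 : Ordinal.{u}) < θo := hθlim.pos
  set c0 : M := Ordinal.enum r ⟨0, lt_of_lt_of_le h0 hθo⟩ with hc0
  have hc0θ : Ordinal.typein r c0 < θo := by rw [hc0, Ordinal.typein_enum]; exact h0
  have hAne : A.Nonempty := ⟨(g c0).1, ⟨c0, hc0θ, le_refl _⟩⟩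
  have hBne : B.Nonempty := ⟨(g c0).2, yB c0⟩
  have hAB : ∀ a ∈ A, ∀ b ∈ B, a < b := by
    rintro a ⟨c, hc, hle⟩ b hb
    exact lt_of_le_of_lt hle (hBgt b hb c hc)
  have hAnomax : ∀ a ∈ A, ∃ a' ∈ A, a < a' := by
    rintro a ⟨c, hc, hle⟩
    obtain ⟨c', hcc', hc'θ⟩ := succIdx c hc
    exact ⟨(g c').1, ⟨c', hc'θ, le_refl _⟩, lt_of_le_of_lt hle (xmono c c' hc hcc')⟩
  have hBnomin : ∀ b ∈ B, ∃ b' ∈ B, b' < b := by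
    intro b hb
    by_cases H : (∀ c, r c b → Ordinal.typein r c < θo → (g c).1 < b) ∧
        (∀ c, r c b → b < (g c).2)
    · exact ⟨(g b).2, yB b, (inv b).2.2.2.2 H⟩
    · rw [not_and_or] at H
      rcases H with H | H
      · push_neg at H
        obtain ⟨c, hcb, hcθ, hle⟩ := H
        exact absurd ⟨c, hcθ, hle⟩ hb
      · push_neg at H
        obtain ⟨c, hcb, hle⟩ := H
        have h1 : Order.succ (Ordinal.typein r c) < Ordinal.type r :=
          hlamlim.succ_lt (Ordinal.typein_lt_type r c)
        set d : M := Ordinal.enum r ⟨Order.succ (Ordinal.typein r c), h1⟩ with hd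
        have hcd : r c d := by
          rw [← Ordinal.typein_lt_typein r, hd, Ordinal.typein_enum]
          exact Order.lt_succ _
        exact ⟨(g d).2, yB d, lt_of_lt_of_le (ymono c d hcd) hle⟩
    -- note: `hle : (g c).2 ≤ b`
  -- the canonical cofinal set
  set S : Set M := (fun c => (g c).1) '' {c | Ordinal.typein r c < θo} with hS
  have hSA : S ⊆ A := by rintro s ⟨c, hc, rfl⟩; exact ⟨c, hc, le_refl _⟩
  have hScof : ∀ a ∈ A, ∃ s ∈ S, a ≤ s := by
    rintro a ⟨c, hc, hle⟩
    exact ⟨(g c).1, ⟨c, hc, rfl⟩, hle⟩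
  -- lower bound for the cofinality
  have hlow : ∀ T : Set M, T ⊆ A → (∀ a ∈ A, ∃ s ∈ T, a ≤ s) → θ ≤ Cardinal.mk ↥T := by
    intro T hTA hTcof
    by_contra hlt
    push_neg at hlt
    have idx : ∀ s : T, ∃ c, Ordinal.typein r c < θo ∧ (s : M) ≤ (g c).1 :=
      fun s => hTA s.2
    choose F hF1 hF2 using idx
    set f : T → Ordinal.{u} := fun s => Order.succ (Ordinal.typein r (F s)) with hf
    have hfθ : ∀ s, f s < θo := fun s => hθlim.succ_lt (hF1 s)
    have hsup : iSup f < θo := by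
      refine Ordinal.iSup_lt_ord ?_ hfθ
      rw [hθreg.cof_eq]
      exact hlt
    set b' : M := Ordinal.enum r ⟨iSup f, lt_of_lt_of_le hsup hθo⟩ with hb'
    have hb'θ : Ordinal.typein r b' = iSup f := by rw [hb', Ordinal.typein_enum]
    have hmem : (g b').1 ∈ A := ⟨b', by rw [hb'θ]; exact hsup, le_refl _⟩
    obtain ⟨s, hsT, hle⟩ := hTcof _ hmem
    have hrs : r (F ⟨s, hsT⟩) b' := by
      rw [← Ordinal.typein_lt_typein r, hb'θ]
      exact lt_of_lt_of_le (Order.lt_succ _) (le_ciSup (Ordinal.bddAbove_range f) ⟨s, hsT⟩)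
    have : (g b').1 < (g b').1 :=
      lt_of_le_of_lt (le_trans hle (hF2 ⟨s, hsT⟩))
        (xmono _ _ (hF1 ⟨s, hsT⟩) hrs)
    exact lt_irrefl _ this
  -- upper bound for the canonical cofinal set
  have hSub : Cardinal.mk ↥S ≤ θ := by
    refine Cardinal.mk_image_le.trans ?_
    rcases lt_or_eq_of_le hθo with h | h
    · have : {c : M | Ordinal.typein r c < θo} = {c : M | r c (Ordinal.enum r ⟨θo, h⟩)} := by
        ext c
        rw [mem_setOf_eq, mem_setOf_eq, ← Ordinal.typein_lt_typein r, Ordinal.typein_enum]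
      rw [this]
      have := Ordinal.card_typein (r := r) (Ordinal.enum r ⟨θo, h⟩)
      rw [show Cardinal.mk ↥{c : M | r c (Ordinal.enum r ⟨θo, h⟩)} =
        Cardinal.mk {y // r y (Ordinal.enum r ⟨θo, h⟩)} from rfl, ← this,
        Ordinal.typein_enum, hθo_def, Cardinal.card_ord]
    · have : {c : M | Ordinal.typein r c < θo} = Set.univ := by
        ext c
        simp only [mem_setOf_eq, mem_univ, iff_true]
        rw [h]; exact Ordinal.typein_lt_type r c
      rw [this, Cardinal.mk_univ, hM]
      have : θ = lam := by
        apply Cardinal.ord_injective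
        rw [← hθo_def, h, htype]
      rw [this]
  have hScard : Cardinal.mk ↥S = θ := le_antisymm hSub (hlow S hSA hScof)
  refine ⟨A, B, ⟨Set.union_compl_self A, hAB, hAne, hBne, hAnomax, hBnomin⟩, ?_⟩
  apply le_antisymm
  · exact csInf_le' ⟨S, hSA, hScof, hScard⟩
  · refine le_csInf ⟨θ, S, hSA, hScof, hScard⟩ ?_
    rintro c ⟨T, hT1, hT2, rfl⟩
    exact hlow T hT1 hT2
end
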